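/- arXiv:2106.12409 — 2 statements merged into one kernel-verified Lean document; each statement's English description precedes it below -/
import Mathlib

section
/- Let p be an odd prime and K a finite field of characteristic p coprime to 2g+2, and fix a non-square ε ∈ K^×. Every separable polynomial of degree 2g+2 over K can be transformed, by a linear fractional change of variable x and scaling of y, into the form c⁻¹(x^{2g+2} + b x^{2g} + a_{2g−1} x^{2g−1} + ⋯ + a₁ x + a₀) with a_i ∈ K, b ∈ {0, 1, ε}, and c ∈ {1, ε}. -/
/-!
STATEMENT 8: Let `p` be an odd prime and `K` a finite field of characteristic `p`
coprime to `2g+2`, and fix a non-square `ε ∈ K^×`.  Every separable polynomial of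
degree `2g+2` over `K` can be transformed, by a linear change of the homogenized
variables (an element of `GL₂(K)`) and scaling by a square `λ²`, into the form
`c⁻¹ (x^(2g+2) + b x^(2g) + a_(2g−1) x^(2g−1) + ⋯ + a₁ x + a₀)` with `a_i ∈ K`,
`b ∈ {0, 1, ε}` and `c ∈ {1, ε}`.
-/

open MvPolynomial Polynomial

/-- The degree-`n` homogenization of a polynomial as a binary form. -/
noncomputable def homog2 {K : Type} [CommRing K] (n : ℕ) (f : Polynomial K) :
    MvPolynomial (Fin 2) K :=
  ∑ k ∈ Finset.range (n + 1),
    MvPolynomial.C (f.coeff k) * MvPolynomial.X 0 ^ k * MvPolynomial.X 1 ^ (n - k)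

/-- The action of a `2 × 2` matrix on binary forms by linear substitution. -/
noncomputable def glSub {K : Type} [CommRing K] (h : Matrix (Fin 2) (Fin 2) K)
    (F : MvPolynomial (Fin 2) K) : MvPolynomial (Fin 2) K :=
  MvPolynomial.aeval
    (fun i : Fin 2 => MvPolynomial.C (h i 0) * MvPolynomial.X 0 + MvPolynomial.C (h i 1) * MvPolynomial.X 1) F

/-!
Both substitutions used are affine, `x ↦ u x + t`, and act on binary forms through the matrix
`!![u, t; 0, 1]`, which turns the homogenization of `f` into the homogenization of
`f (u x + t)`. Since `2g + 2` is invertible in `K`, a translation kills the coefficient of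
`x^(2g+1)`. A scaling `x ↦ u x` multiplies the ratio of the coefficients of `x^(2g)` and
`x^(2g+2)` by `u²`, and `K^× / K^×² = {1, ε}` for a finite field, so this ratio can be brought
into `{0, 1, ε}`. Finally the leading coefficient is `c λ²` with `c ∈ {1, ε}`.
-/

lemma MvPolynomial.IsHomogeneous.glSub {R : Type} [CommRing R] {F : MvPolynomial (Fin 2) R}
    {n : ℕ} (hF : F.IsHomogeneous n) (h : Matrix (Fin 2) (Fin 2) R) :
    (glSub h F).IsHomogeneous n := by
  rw [← one_mul n]
  exact hF.aeval _ fun i =>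
    (MvPolynomial.isHomogeneous_C_mul_X (h i 0) 0).add (MvPolynomial.isHomogeneous_C_mul_X _ 1)

lemma FiniteField.exists_eq_mul_sq_of_not_isSquare {F : Type*} [Field F] [Fintype F] {ε : F}
    (hε : ¬IsSquare ε) {x : F} (hx : x ≠ 0) :
    ∃ c ∈ ({1, ε} : Set F), ∃ r, r ≠ 0 ∧ x = c * r ^ 2 := by
  classical
  by_cases hsq : IsSquare x
  · obtain ⟨r, rfl⟩ := hsq
    exact ⟨1, by simp, r, by simpa using hx, by ring⟩
  · have hε0 : ε ≠ 0 := by rintro rfl; exact hε IsSquare.zero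
    have : IsSquare (x * ε) := by
      rw [← quadraticChar_one_iff_isSquare (mul_ne_zero hx hε0), map_mul,
        quadraticChar_neg_one_iff_not_isSquare.mpr hsq,
        quadraticChar_neg_one_iff_not_isSquare.mpr hε]
      norm_num
    obtain ⟨s, hs⟩ := this
    have hs0 : s ≠ 0 := by rintro rfl; simp_all
    refine ⟨ε, by simp, s / ε, div_ne_zero hs0 hε0, ?_⟩
    field_simp
    linear_combination hs

namespace Polynomial

variable {R : Type} [CommRing R]

lemma homog2_eq_homogenize (n : ℕ) (f : R[X]) : homog2 n f = f.homogenize n := by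
  rw [homog2, homogenize, Finset.Nat.sum_antidiagonal_eq_sum_range_succ_mk]
  refine Finset.sum_congr rfl fun k _ => ?_
  rw [Finsupp.update_eq_add_single (by simp), MvPolynomial.monomial_single_add,
    ← MvPolynomial.C_mul_X_pow_eq_monomial]
  ring

lemma glSub_homogenize (n : ℕ) (u t : R) {f : R[X]} (hf : f.natDegree ≤ n) :
    glSub !![u, t; 0, 1] (f.homogenize n) = (f.comp (C u * X + C t)).homogenize n := by
  refine (homogenize_eq_of_isHomogeneous ((isHomogeneous_homogenize f).glSub _) ?_).symm
  rw [glSub, ← AlgHom.comp_apply, MvPolynomial.comp_aeval, aeval_homogenize_of_eq_one hf,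
    comp_eq_aeval] <;> simp

lemma coeff_taylor_of_natDegree_le {R : Type*} [Semiring R] {f : R[X]} {n : ℕ}
    (hf : f.natDegree ≤ n + 1) (t : R) :
    (taylor t f).coeff n = f.coeff n + (n + 1) * f.coeff (n + 1) * t := by
  have hasse : hasseDeriv n f = C (f.coeff n) + C ((n + 1) * f.coeff (n + 1)) * X := by
    ext (_ | _ | j)
    · simp [hasseDeriv_coeff]
    · simp [hasseDeriv_coeff, add_comm 1 n]
    · have hj : f.natDegree < j + 2 + n := by omega
      simp [hasseDeriv_coeff, coeff_one, coeff_eq_zero_of_natDegree_lt hj]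
  simp only [taylor_coeff, hasse, eval_add, eval_C_mul, eval_C, eval_X]

lemma exists_coeff_taylor_eq_zero {K : Type*} [Field K] {f : K[X]} {n : ℕ}
    (hf : f.natDegree = n + 1) (hn : ((n + 1 : ℕ) : K) ≠ 0) :
    ∃ t, (taylor t f).coeff n = 0 := by
  have hlead : f.coeff (n + 1) ≠ 0 := by
    rw [← hf, coeff_natDegree, Ne, leadingCoeff_eq_zero]
    exact ne_zero_of_natDegree_gt (n := 0) (by omega)
  push_cast at hn
  refine ⟨-f.coeff n / ((n + 1) * f.coeff (n + 1)), ?_⟩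
  rw [coeff_taylor_of_natDegree_le hf.le]
  field_simp
  ring

lemma eq_coeff_smul_of_coeff_succ_eq_zero {K : Type*} [Field K] {P : K[X]} {m : ℕ}
    (hP : P.natDegree ≤ m + 2) (hL : P.coeff (m + 2) ≠ 0) (hsub : P.coeff (m + 1) = 0) {b : K}
    (hb : P.coeff m = P.coeff (m + 2) * b) :
    P = P.coeff (m + 2) • (X ^ (m + 2) + C b * X ^ m +
      ∑ i ∈ Finset.range m, C (P.coeff i / P.coeff (m + 2)) * X ^ i) := by
  have hcancel : ∀ i, C (P.coeff (m + 2)) * (C (P.coeff i / P.coeff (m + 2)) * X ^ i) =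
      C (P.coeff i) * X ^ i := fun i => by rw [← mul_assoc, ← C_mul, mul_div_cancel₀ _ hL]
  conv_lhs => rw [as_sum_range' P (m + 3) (by omega)]
  simp only [← C_mul_X_pow_eq_monomial, Finset.sum_range_succ, hsub, hb, smul_eq_C_mul, mul_add,
    Finset.mul_sum, hcancel, C_0, C_mul]
  ring

theorem exists_comp_C_mul_X_add_C_eq_smul {K : Type*} [Field K] [Fintype K] {ε : K}
    (hε : ¬IsSquare ε) {f : K[X]} {m : ℕ} (hf : f.natDegree = m + 2)
    (hm : ((m + 2 : ℕ) : K) ≠ 0) :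
    ∃ u t : K, u ≠ 0 ∧ ∃ lam : K, lam ≠ 0 ∧ ∃ (b c : K) (a : ℕ → K),
      b ∈ ({0, 1, ε} : Set K) ∧ c ∈ ({1, ε} : Set K) ∧
      f.comp (C u * X + C t) = (lam ^ 2 * c⁻¹) •
        (X ^ (m + 2) + C b * X ^ m + ∑ i ∈ Finset.range m, C (a i) * X ^ i) := by
  obtain ⟨t, ht⟩ := exists_coeff_taylor_eq_zero (n := m + 1) hf hm
  set f₁ := taylor t f
  have hl : f₁.coeff (m + 2) ≠ 0 := by
    rw [← hf, coeff_taylor_natDegree, Ne, leadingCoeff_eq_zero]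
    exact ne_zero_of_natDegree_gt (n := 0) (by omega)
  obtain ⟨b, hb, u, hu, hbu⟩ : ∃ b ∈ ({0, 1, ε} : Set K), ∃ u : K, u ≠ 0 ∧
      f₁.coeff m = f₁.coeff (m + 2) * u ^ 2 * b := by
    by_cases hd : f₁.coeff m = 0
    · exact ⟨0, by simp, 1, one_ne_zero, by simp [hd]⟩
    · obtain ⟨c, hc, r, hr, hcr⟩ :=
        FiniteField.exists_eq_mul_sq_of_not_isSquare hε (div_ne_zero hd hl)
      refine ⟨c, Set.mem_insert_of_mem 0 hc, r, hr, ?_⟩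
      rw [div_eq_iff hl] at hcr
      linear_combination hcr
  set f₂ := f₁.comp (C u * X)
  have hL : f₂.coeff (m + 2) ≠ 0 := by simp [f₂, hl, hu]
  obtain ⟨c, hc, r, hr, hLcr⟩ := FiniteField.exists_eq_mul_sq_of_not_isSquare hε hL
  have hc0 : c ≠ 0 := by rintro rfl; simp_all
  refine ⟨u, t, hu, c * r, mul_ne_zero hc0 hr, b, c, fun i => f₂.coeff i / f₂.coeff (m + 2),
    hb, hc, ?_⟩
  have hcomp : f.comp (C u * X + C t) = f₂ := by
    simp [f₂, f₁, taylor_apply, comp_assoc]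
  have hdeg : f₂.natDegree = m + 2 := by
    simp [f₂, f₁, natDegree_comp, natDegree_C_mul_X _ hu, hf]
  rw [hcomp, show (c * r) ^ 2 * c⁻¹ = f₂.coeff (m + 2) by rw [hLcr]; field_simp]
  refine eq_coeff_smul_of_coeff_succ_eq_zero hdeg.le hL (by simp [f₂, ht]) ?_
  simp only [f₂, comp_C_mul_X_coeff, hbu]
  ring

end Polynomial

theorem stmt_8_general (p : ℕ)
    (K : Type) [Field K] [Fintype K] [CharP K p]
    (g : ℕ) (hcop : Nat.Coprime p (2 * g + 2))
    (ε : K) (hε : ¬ IsSquare ε)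
    (f : Polynomial K) (hdeg : f.natDegree = 2 * g + 2) :
    ∃ (h : GL (Fin 2) K) (lam : Kˣ) (b c : K) (a : ℕ → K),
      b ∈ ({0, 1, ε} : Set K) ∧ c ∈ ({1, ε} : Set K) ∧
      glSub (h : Matrix (Fin 2) (Fin 2) K) (homog2 (2 * g + 2) f) =
        MvPolynomial.C ((lam : K) ^ 2) *
          homog2 (2 * g + 2) (c⁻¹ •
            (Polynomial.X ^ (2 * g + 2) + Polynomial.C b * Polynomial.X ^ (2 * g) +
              ∑ i ∈ Finset.range (2 * g), Polynomial.C (a i) * Polynomial.X ^ i)) := by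
  have hn : ((2 * g + 2 : ℕ) : K) ≠ 0 :=
    letI := invertibleOfCoprime (R := K) hcop.symm
    (isUnit_of_invertible _).ne_zero
  obtain ⟨u, t, hu, lam, hlam, b, c, a, hb, hc, hcomp⟩ :=
    Polynomial.exists_comp_C_mul_X_add_C_eq_smul hε hdeg hn
  have hdet : (!![u, t; 0, 1]).det ≠ 0 := by simpa [Matrix.det_fin_two_of] using hu
  refine ⟨.mkOfDetNeZero _ hdet, .mk0 lam hlam, b, c, a, hb, hc, ?_⟩
  rw [homog2_eq_homogenize, homog2_eq_homogenize]
  change glSub !![u, t; 0, 1] _ = _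
  rw [glSub_homogenize _ _ _ hdeg.le, hcomp, homogenize_smul, homogenize_smul,
    MvPolynomial.C_mul', smul_smul, Units.val_mk0]

theorem stmt_8 (p : ℕ) (hp : p.Prime) (hodd : Odd p)
    (K : Type) [Field K] [Fintype K] [CharP K p]
    (g : ℕ) (hcop : Nat.Coprime p (2 * g + 2))
    (ε : K) (hε0 : ε ≠ 0) (hε : ¬ IsSquare ε)
    (f : Polynomial K) (hsep : f.Separable) (hdeg : f.natDegree = 2 * g + 2) :
    ∃ (h : GL (Fin 2) K) (lam : Kˣ) (b c : K) (a : ℕ → K),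
      b ∈ ({0, 1, ε} : Set K) ∧ c ∈ ({1, ε} : Set K) ∧
      glSub (h : Matrix (Fin 2) (Fin 2) K) (homog2 (2 * g + 2) f) =
        MvPolynomial.C ((lam : K) ^ 2) *
          homog2 (2 * g + 2) (c⁻¹ •
            (Polynomial.X ^ (2 * g + 2) + Polynomial.C b * Polynomial.X ^ (2 * g) +
              ∑ i ∈ Finset.range (2 * g), Polynomial.C (a i) * Polynomial.X ^ i)) :=
  stmt_8_general p K g hcop ε hε f hdeg
end

section
/- There exists a superspecial curve of genus 4 in characteristic 5; explicitly, the complete intersection in ℙ³ defined by 2yw + z² = 0 and x³ + y³ + w³ = 0 is a non-singular curve of genus 4 whose Hasse–Witt matrix is zero. -/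
/-!
Non-singularity is the Jacobian criterion: the gradients of `Q = 2yw + z²` and
`P = x³ + y³ + w³` are `(0, 2w, 2z, 2y)` and `3(x², y², 0, w²)`, and away from characteristics
2 and 3 a short case analysis on which of `x, w` vanish finds a non-zero `2 × 2` minor at every
point of the curve.

For the Hasse–Witt matrix, give `x, y, z, w` the weights `(1,0), (0,2), (0,1), (0,0)` in
`ℤ/3 × ℤ/6`. Then `Q` is homogeneous of weight `(0,2)` and `P` of weight `0`, so every monomial of
`(QP)⁴` has weight `(0,8) = (0,2)`, while none of the exponents `(5i−i', 5j−j', 5k−k', 5ℓ−ℓ')`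
has this weight. So the coefficients vanish because these monomials do not occur in `(QP)⁴` at all.
-/

open MvPolynomial

instance : Fact (Nat.Prime 5) := ⟨by norm_num⟩

/-- The exponent vector `x^a y^b z^c w^d`. -/
noncomputable def expVec (a b c d : ℕ) : Fin 4 →₀ ℕ :=
  Finsupp.single 0 a + Finsupp.single 1 b + Finsupp.single 2 c + Finsupp.single 3 d

/-- The quadric `2yw + z²` over `𝔽₂₅`. -/
noncomputable def Qss : MvPolynomial (Fin 4) (GaloisField 5 2) :=
  (2 : GaloisField 5 2) • (X 1 * X 3) + X 2 ^ 2

/-- The cubic `x³ + y³ + w³` over `𝔽₂₅`. -/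
noncomputable def Pss : MvPolynomial (Fin 4) (GaloisField 5 2) :=
  X 0 ^ 3 + X 1 ^ 3 + X 3 ^ 3

theorem Matrix.rank_eq_two_of_minor_ne_zero {K n : Type*} [Field K] [Fintype n]
    (M : Matrix (Fin 2) n K) (j₁ j₂ : n) (h : M 0 j₁ * M 1 j₂ - M 0 j₂ * M 1 j₁ ≠ 0) :
    M.rank = 2 := by
  refine le_antisymm (by simpa using M.rank_le_card_height) ?_
  have hunit : IsUnit (M.submatrix id ![j₁, j₂]) := by
    rw [Matrix.isUnit_iff_isUnit_det, Matrix.det_fin_two, isUnit_iff_ne_zero]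
    simpa using h
  simpa [Matrix.rank_of_isUnit _ hunit] using M.rank_submatrix_le id ![j₁, j₂]

theorem rank_jacobian_eq_two {K : Type*} [Field K] (h2 : (2 : K) ≠ 0) (h3 : (3 : K) ≠ 0)
    {a : Fin 4 → K} (ha : a ≠ 0) (hQ : 2 * (a 1 * a 3) + a 2 ^ 2 = 0)
    (hP : a 0 ^ 3 + a 1 ^ 3 + a 3 ^ 3 = 0) :
    (!![0, 2 * a 3, 2 * a 2, 2 * a 1; 3 * a 0 ^ 2, 3 * a 1 ^ 2, 0, 3 * a 3 ^ 2]).rank = 2 := by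
  by_cases hx : a 0 = 0
  · have hy : a 1 ≠ 0 := by
      intro hy
      refine ha (funext fun i => ?_)
      have hw : a 3 = 0 := by simpa [hx, hy] using hP
      have hz : a 2 = 0 := by simpa [hy] using hQ
      fin_cases i <;> assumption
    have hz : a 2 ≠ 0 := by
      intro hz
      have hw : a 3 = 0 := by simpa [hz, h2, hy] using hQ
      exact hy (by simpa [hx, hw] using hP)
    apply Matrix.rank_eq_two_of_minor_ne_zero _ 2 1
    simp [h2, h3, hy, hz]
  · by_cases hw : a 3 = 0
    · have hy : a 1 ≠ 0 := fun hy => hx (by simpa [hy, hw] using hP)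
      apply Matrix.rank_eq_two_of_minor_ne_zero _ 3 0
      simp [h2, h3, hx, hy]
    · apply Matrix.rank_eq_two_of_minor_ne_zero _ 1 0
      simp [h2, h3, hx, hw]

section Evaluation

variable {K : Type*} [CommRing K] [Algebra (GaloisField 5 2) K] (a : Fin 4 → K)

theorem eval_map_Qss : eval a (Qss.map (algebraMap _ K)) = 2 * (a 1 * a 3) + a 2 ^ 2 := by
  simp [Qss, smul_eq_C_mul, map_ofNat]

theorem eval_map_Pss : eval a (Pss.map (algebraMap _ K)) = a 0 ^ 3 + a 1 ^ 3 + a 3 ^ 3 := by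
  simp [Pss]

theorem jacobian_Qss_Pss :
    Matrix.of ![fun i => eval a ((pderiv i Qss).map (algebraMap _ K)),
      fun i => eval a ((pderiv i Pss).map (algebraMap _ K))] =
    !![0, 2 * a 3, 2 * a 2, 2 * a 1; 3 * a 0 ^ 2, 3 * a 1 ^ 2, 0, 3 * a 3 ^ 2] := by
  simp only [Qss, Pss, smul_eq_C_mul, map_add, pderiv_C_mul]
  ext i j
  fin_cases i <;> fin_cases j <;> simp [map_ofNat]

end Evaluation

def ssWeight : Fin 4 → ZMod 3 × ZMod 6 := ![(1, 0), (0, 2), (0, 1), (0, 0)]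

theorem weight_ssWeight_expVec (a b c d : ℕ) :
    Finsupp.weight ssWeight (expVec a b c d) = ((a : ZMod 3), ((2 * b + c : ℕ) : ZMod 6)) := by
  simp [expVec, ssWeight, Finsupp.weight_single, mul_comm]

theorem isWeightedHomogeneous_Qss : IsWeightedHomogeneous ssWeight Qss (0, 2) := by
  have hyw := (isWeightedHomogeneous_X (GaloisField 5 2) ssWeight 1).mul
    (isWeightedHomogeneous_X _ ssWeight 3)
  have hz := (isWeightedHomogeneous_X (GaloisField 5 2) ssWeight 2).pow 2
  rw [Qss, smul_eq_C_mul]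
  exact (hyw.C_mul 2).add hz

theorem isWeightedHomogeneous_Pss : IsWeightedHomogeneous ssWeight Pss 0 := by
  have hX (i : Fin 4) := (isWeightedHomogeneous_X (GaloisField 5 2) ssWeight i).pow 3
  exact ((hX 0).add (hX 1)).add (hX 3)

theorem coeff_Qss_mul_Pss_pow_four_eq_zero {d : Fin 4 →₀ ℕ}
    (hd : Finsupp.weight ssWeight d ≠ (0, 2)) : coeff d ((Qss * Pss) ^ 4) = 0 :=
  ((isWeightedHomogeneous_Qss.mul isWeightedHomogeneous_Pss).pow 4).coeff_eq_zero d hd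

theorem weight_hasseWitt_exponent_ne {i j k l i' j' k' l' : ℕ}
    (hi : 0 < i) (hj : 0 < j) (hk : 0 < k) (hl : 0 < l)
    (hj' : 0 < j') (hl' : 0 < l')
    (hs : i + j + k + l = 5) (hs' : i' + j' + k' + l' = 5) :
    Finsupp.weight ssWeight (expVec (5 * i - i') (5 * j - j') (5 * k - k') (5 * l - l')) ≠
      (0, 2) := by
  rw [weight_ssWeight_expVec]
  intro h
  have h3 : 3 ∣ 5 * i - i' := (ZMod.natCast_eq_zero_iff _ 3).1 (Prod.ext_iff.1 h).1
  have h6 : (2 * (5 * j - j') + (5 * k - k')) % 6 = 2 % 6 :=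
    (ZMod.natCast_eq_natCast_iff' _ 2 6).1 (Prod.ext_iff.1 h).2
  obtain rfl | rfl : i' = 1 ∨ i' = 2 := by omega
  all_goals obtain rfl | rfl : k' = 1 ∨ k' = 2 := by omega
  all_goals omega

theorem stmt_11 :
    (∀ a : Fin 4 → AlgebraicClosure (GaloisField 5 2), a ≠ 0 →
      (MvPolynomial.eval a) (Qss.map (algebraMap (GaloisField 5 2) _)) = 0 →
      (MvPolynomial.eval a) (Pss.map (algebraMap (GaloisField 5 2) _)) = 0 →
      (Matrix.of ![fun i => (MvPolynomial.eval a)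
          ((MvPolynomial.pderiv i Qss).map (algebraMap (GaloisField 5 2) _)),
        fun i => (MvPolynomial.eval a)
          ((MvPolynomial.pderiv i Pss).map (algebraMap (GaloisField 5 2) _))]).rank = 2) ∧
    (∀ i j k l i' j' k' l' : ℕ,
      0 < i → 0 < j → 0 < k → 0 < l → 0 < i' → 0 < j' → 0 < k' → 0 < l' →
      i + j + k + l = 5 → i' + j' + k' + l' = 5 →
      MvPolynomial.coeff (expVec (5 * i - i') (5 * j - j') (5 * k - k') (5 * l - l'))
        ((Qss * Pss) ^ 4) = 0) := by
  refine ⟨fun a ha hQ hP => ?_,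
    fun i j k l i' j' k' l' hi hj hk hl _ hj' _ hl' hs hs' => ?_⟩
  · have hne (n : ℕ) (hn : ¬ 5 ∣ n) : (n : AlgebraicClosure (GaloisField 5 2)) ≠ 0 :=
      (CharP.cast_eq_zero_iff _ 5 n).not.2 hn
    rw [eval_map_Qss] at hQ
    rw [eval_map_Pss] at hP
    rw [jacobian_Qss_Pss]
    exact rank_jacobian_eq_two (by exact_mod_cast hne 2 (by norm_num))
      (by exact_mod_cast hne 3 (by norm_num)) ha hQ hP
  · exact coeff_Qss_mul_Pss_pow_four_eq_zero
      (weight_hasseWitt_exponent_ne hi hj hk hl hj' hl' hs hs')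
end
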